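/- Let G = (V, ∅, ℓ) be a parallel episode (an episode with no edges). For each label l, fix a strict linear order ≺_l on the set ℓ⁻¹(l) of vertices labeled l, and let H = (V, E, ℓ) be the episode whose edge set is E = {(v, w) : v ≠ w, ℓ(v) = ℓ(w), v ≺_{ℓ(v)} w}. Then H is a strict episode, and any sequence S over Σ covers G if and only if S covers H. -/

import Mathlib

open scoped Classical

/-- An episode: a finite DAG with labelled vertices. -/
structure Episode (V A : Type*) where
  verts : Finset V
  edges : Finset (V × V)
  lab : V → A
  edges_sub : ∀ e ∈ edges, e.1 ∈ verts ∧ e.2 ∈ verts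
  acyclic : ∀ v, ¬ Relation.TransGen (fun a b => (a, b) ∈ edges) v v

namespace Episode

variable {V A : Type*} [DecidableEq V]

/-- A strict episode: any two distinct vertices sharing a label are connected. -/
def Strict (G : Episode V A) : Prop :=
  ∀ v ∈ G.verts, ∀ w ∈ G.verts, v ≠ w → G.lab v = G.lab w →
    (v, w) ∈ G.edges ∨ (w, v) ∈ G.edges

/-- `W` induces a prefix subgraph of `G`: it is closed under taking ancestors. -/
def IsPrefix (G : Episode V A) (W : Finset V) : Prop :=
  W ⊆ G.verts ∧ ∀ v ∈ W, ∀ w, (w, v) ∈ G.edges → w ∈ W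

/-- Labelled edge of the machine `M(G)`: `(H, F)` is an edge with label `l` when `H` is
obtained from `F` by deleting a single sink vertex of `F` labelled `l`
(states are identified with their vertex sets, as prefix subgraphs are induced). -/
def MachEdge (G : Episode V A) (H F : Finset V) (l : A) : Prop :=
  G.IsPrefix H ∧ G.IsPrefix F ∧
    ∃ x, x ∉ H ∧ F = insert x H ∧ G.lab x = l ∧ ∀ w ∈ F, (x, w) ∉ G.edges

/-- The set of (unlabelled) edges of the machine `M(G)`. -/
def MachineEdges (G : Episode V A) : Set (Finset V × Finset V) :=
  {e | ∃ l, G.MachEdge e.1 e.2 l}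

/-- A sequence `S` covers an episode `G`. -/
def Covers (G : Episode V A) (S : List A) : Prop :=
  ∃ m : V → ℕ, Set.InjOn m ↑G.verts ∧
    (∀ v ∈ G.verts, S[m v]? = some (G.lab v)) ∧
    ∀ e ∈ G.edges, m e.1 < m e.2

/-- The induced episode `G(W)`. -/
def induce (G : Episode V A) (W : Finset V) : Episode V A where
  verts := G.verts ∩ W
  edges := G.edges.filter fun e => e.1 ∈ W ∧ e.2 ∈ W
  lab := G.lab
  edges_sub := by
    intro e he
    rw [Finset.mem_filter] at he
    have h1 := G.edges_sub e he.1
    exact ⟨Finset.mem_inter.mpr ⟨h1.1, he.2.1⟩, Finset.mem_inter.mpr ⟨h1.2, he.2.2⟩⟩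
  acyclic := by
    intro v hv
    have key : ∀ a b, Relation.TransGen (fun a b => (a, b) ∈ G.edges.filter
        fun e => e.1 ∈ W ∧ e.2 ∈ W) a b → Relation.TransGen (fun a b => (a, b) ∈ G.edges) a b := by
      intro a b h
      induction h with
      | single hab => exact Relation.TransGen.single (Finset.mem_filter.mp hab).1
      | tail _ hab ih => exact Relation.TransGen.tail ih (Finset.mem_filter.mp hab).1
    exact G.acyclic v (key v v hv)

/-- One greedy step of the machine `M(G)` from state `H` reading the symbol `s`:
follow the outgoing edge labelled `s` if there is one, otherwise stay. -/
noncomputable def greedyStep (G : Episode V A) (H : Finset V) (s : A) : Finset V :=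
  if h : ∃ F, G.MachEdge H F s then h.choose else H

/-- The greedy state `g(M(G), S, H)`. -/
noncomputable def greedy (G : Episode V A) : Finset V → List A → Finset V
  | H, [] => H
  | H, s :: S => greedy G (G.greedyStep H s) S

/-- The edge set `block(W | G)` of the machine `M(G)`. -/
def Block (G : Episode V A) (W : Finset V) : Set (Finset V × Finset V) :=
  {e | (∃ l, G.MachEdge e.1 e.2 l) ∧ (e.1 ∩ W).Nonempty ∧ e.2 \ e.1 ⊆ W}

/-- The states of the machine `M(G)`: all prefix subgraphs of `G`. -/
noncomputable def states (G : Episode V A) : Finset (Finset V) :=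
  G.verts.powerset.filter fun X => G.IsPrefix X

/-- The number of positions `i` of `S` at which the machine is (greedily) in state `H`
and the symbol read is `l`. -/
noncomputable def countHL (G : Episode V A) (S : List A) (H : Finset V) (l : A) : ℕ :=
  ((Finset.range S.length).filter fun i => G.greedy ∅ (S.take i) = H ∧ S[i]? = some l).card

section Prob

variable [Fintype A]

/-- `pInd G p H n`: probability that `n` i.i.d. symbols with distribution `p`
lead the machine greedily from the source state to `H`. -/
noncomputable def pInd (G : Episode V A) (p : A → ℝ) (H : Finset V) (n : ℕ) : ℝ :=
  ∑ f : Fin n → A, if G.greedy ∅ (List.ofFn f) = H then ∏ i, p (f i) else 0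

/-- Unnormalized weight of label `l` at state `H` in the partition model. -/
noncomputable def pweight (G : Episode V A) (C₁ C₂ : Set (Finset V × Finset V))
    (u : A → ℝ) (t₁ t₂ : ℝ) (H : Finset V) (l : A) : ℝ :=
  if ∃ F, (H, F) ∈ C₁ ∧ G.MachEdge H F l then Real.exp (u l + t₁)
  else if ∃ F, (H, F) ∈ C₂ ∧ G.MachEdge H F l then Real.exp (u l + t₂)
  else Real.exp (u l)

/-- Conditional probability `p(l | H)` of the partition model. -/
noncomputable def condP (G : Episode V A) (C₁ C₂ : Set (Finset V × Finset V))
    (u : A → ℝ) (t₁ t₂ : ℝ) (H : Finset V) (l : A) : ℝ :=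
  G.pweight C₁ C₂ u t₁ t₂ H l / ∑ l' : A, G.pweight C₁ C₂ u t₁ t₂ H l'

/-- Probability of a sequence under the partition model, started from state `H`. -/
noncomputable def seqP (G : Episode V A) (C₁ C₂ : Set (Finset V × Finset V))
    (u : A → ℝ) (t₁ t₂ : ℝ) : Finset V → List A → ℝ
  | _, [] => 1
  | H, s :: S => G.condP C₁ C₂ u t₁ t₂ H s * seqP G C₁ C₂ u t₁ t₂ (G.greedyStep H s) S

/-- `pPart G C₁ C₂ u t₁ t₂ H n`: probability under the partition model that a random
sequence of length `n` leads the machine greedily from the source state to `H`. -/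
noncomputable def pPart (G : Episode V A) (C₁ C₂ : Set (Finset V × Finset V))
    (u : A → ℝ) (t₁ t₂ : ℝ) (H : Finset V) (n : ℕ) : ℝ :=
  ∑ f : Fin n → A,
    if G.greedy ∅ (List.ofFn f) = H then G.seqP C₁ C₂ u t₁ t₂ ∅ (List.ofFn f) else 0

end Prob

/-- The transitive closure of an episode. -/
noncomputable def closure (G : Episode V A) : Episode V A where
  verts := G.verts
  edges := (G.verts ×ˢ G.verts).filter fun e =>
    Relation.TransGen (fun a b => (a, b) ∈ G.edges) e.1 e.2
  lab := G.lab
  edges_sub := by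
    intro e he
    rw [Finset.mem_filter] at he
    exact Finset.mem_product.mp he.1
  acyclic := by
    intro v hv
    apply G.acyclic v
    rw [← Relation.transGen_idem (r := fun a b => (a, b) ∈ G.edges)]
    have key : ∀ a b, Relation.TransGen (fun a b => (a, b) ∈ (G.verts ×ˢ G.verts).filter fun e =>
        Relation.TransGen (fun a b => (a, b) ∈ G.edges) e.1 e.2) a b →
        Relation.TransGen (Relation.TransGen (fun a b => (a, b) ∈ G.edges)) a b := by
      intro a b h
      induction h with
      | single hab => exact Relation.TransGen.single (Finset.mem_filter.mp hab).2
      | tail _ hab ih => exact Relation.TransGen.tail ih (Finset.mem_filter.mp hab).2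
    exact key v v hv

end Episode

/-!
Let `m` be a cover of the parallel episode `G`. For each label `l`, the positions `m` assigns to
the vertices labelled `l` all carry `l`; handing them out again so that the vertex of rank `k`
for `≺_l` gets the `k`-th smallest of these positions yields a cover of `H`. Conversely, `G` has
no edges, so a cover of `H` covers `G`.
-/

namespace Finset

variable {V : Type*}

noncomputable def rankIn (s : Finset V) (r : V → V → Prop) (v : V) : ℕ :=
  #{w ∈ s | r w v}

variable {s : Finset V} {r : V → V → Prop} {v w : V}

theorem rankIn_lt_card (hv : v ∈ s) (hirr : ¬ r v v) : s.rankIn r v < #s :=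
  card_lt_card (filter_ssubset.2 ⟨v, hv, hirr⟩)

theorem rankIn_lt_rankIn (hv : v ∈ s) (hirr : ¬ r v v)
    (htrans : ∀ u ∈ s, r u v → r v w → r u w) (hvw : r v w) :
    s.rankIn r v < s.rankIn r w := by
  refine card_lt_card ((ssubset_iff_of_subset fun u hu => ?_).2 ⟨v, ?_, fun h => ?_⟩)
  · obtain ⟨hus, huv⟩ := mem_filter.1 hu
    exact mem_filter.2 ⟨hus, htrans u hus huv hvw⟩
  · exact mem_filter.2 ⟨hv, hvw⟩
  · exact hirr (mem_filter.1 h).2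

theorem exists_increasing_reindex_of_injOn {β : Type*} [LinearOrder β] (m : V → β)
    (hm : Set.InjOn m s) (hirr : ∀ v ∈ s, ¬ r v v)
    (htrans : ∀ u ∈ s, ∀ v ∈ s, ∀ w ∈ s, r u v → r v w → r u w) :
    ∃ m' : V → β, (∀ v ∈ s, m' v ∈ s.image m) ∧ ∀ v ∈ s, ∀ w ∈ s, r v w → m' v < m' w := by
  have hcard : #(s.image m) = #s := card_image_of_injOn hm
  let sorted := (s.image m).orderEmbOfFin hcard
  refine ⟨fun v => if h : s.rankIn r v < #s then sorted ⟨_, h⟩ else m v, fun v hv => ?_,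
    fun v hv w hw hvw => ?_⟩
  · dsimp only
    rw [dif_pos (rankIn_lt_card hv (hirr v hv))]
    exact orderEmbOfFin_mem _ _ _
  · dsimp only
    rw [dif_pos (rankIn_lt_card hv (hirr v hv)), dif_pos (rankIn_lt_card hw (hirr w hw))]
    exact sorted.strictMono
      (rankIn_lt_rankIn hv (hirr v hv) (fun u hu => htrans u hu v hv w hw) hvw)

end Finset

namespace Episode

open Finset

variable {V A : Type*} {G H : Episode V A} {S : List A}

theorem Covers.of_edges_subset (h : H.Covers S) (hv : G.verts = H.verts) (hl : G.lab = H.lab)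
    (he : G.edges ⊆ H.edges) : G.Covers S := by
  obtain ⟨m, hinj, hlab, hedge⟩ := h
  exact ⟨m, hv ▸ hinj, hv ▸ hl ▸ hlab, fun e he' => hedge e (he he')⟩

theorem Covers.of_edges_labelwise_ordered (h : G.Covers S) (hverts : H.verts = G.verts)
    (hlabel : H.lab = G.lab) (ord : A → V → V → Prop)
    (htrans : ∀ l v w x, v ∈ G.verts → w ∈ G.verts → x ∈ G.verts →
      ord l v w → ord l w x → ord l v x)
    (hirr : ∀ l v, v ∈ G.verts → ¬ ord l v v)
    (htotal : ∀ l v w, v ∈ G.verts → w ∈ G.verts → v ≠ w →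
      G.lab v = l → G.lab w = l → ord l v w ∨ ord l w v)
    (he : ∀ e ∈ H.edges, G.lab e.1 = G.lab e.2 ∧ ord (G.lab e.1) e.1 e.2) : H.Covers S := by
  obtain ⟨m, hinj, hm_lab, -⟩ := h
  have hclass (a : A) := exists_increasing_reindex_of_injOn (s := {v ∈ G.verts | G.lab v = a})
    (r := ord a) m (hinj.mono (coe_subset.2 (filter_subset _ _)))
    (fun v hv => hirr a v (mem_filter.1 hv).1)
    (fun u hu v hv w hw => htrans a u v w (mem_filter.1 hu).1 (mem_filter.1 hv).1
      (mem_filter.1 hw).1)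
  choose f hf_mem hf_lt using hclass
  have hmem_class {v} (hv : v ∈ G.verts) : v ∈ {w ∈ G.verts | G.lab w = G.lab v} :=
    mem_filter.2 ⟨hv, rfl⟩
  have hf_lab {v} (hv : v ∈ G.verts) : S[f (G.lab v) v]? = some (G.lab v) := by
    obtain ⟨x, hx, hfx⟩ := mem_image.1 (hf_mem _ v (hmem_class hv))
    obtain ⟨hxG, hxv⟩ := mem_filter.1 hx
    rw [← hfx, hm_lab x hxG, hxv]
  refine ⟨fun v => f (G.lab v) v, fun v hv w hw hvw => ?_, fun v hv => ?_, fun e heH => ?_⟩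
  · dsimp only at hvw
    rw [mem_coe, hverts] at hv hw
    have hvw_lab : G.lab v = G.lab w :=
      Option.some_injective _ ((hf_lab hv).symm.trans (by rw [hvw]; exact hf_lab hw))
    by_contra hne
    have hw_class := hmem_class hw
    rw [← hvw_lab] at hw_class hvw
    rcases htotal _ v w hv hw hne rfl hvw_lab.symm with hlt | hlt
    · exact (hf_lt _ v (hmem_class hv) w hw_class hlt).ne hvw
    · exact (hf_lt _ w hw_class v (hmem_class hv) hlt).ne hvw.symm
  · rw [hlabel]
    exact hf_lab (hverts ▸ hv)
  · obtain ⟨he_lab, he_ord⟩ := he e heH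
    have hmem := H.edges_sub e heH
    rw [hverts] at hmem
    have he2_class := hmem_class hmem.2
    dsimp only
    rw [← he_lab] at he2_class ⊢
    exact hf_lt _ _ (hmem_class hmem.1) _ he2_class he_ord

end Episode

/-- let `G` be a parallel episode, and for each label `l` fix a strict linear
order `ord l` on the vertices of `G` labelled `l`. Let `H` be the episode on the same
labelled vertices whose edges are the pairs of distinct equally-labelled vertices in the
order `ord`. Then `H` is a strict episode and a sequence covers `G` iff it covers `H`. -/
theorem Episode.parallel_strict_equiv {V A : Type*} [DecidableEq V]
    (G : Episode V A) (hG : G.edges = ∅)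
    (ord : A → V → V → Prop)
    (htrans : ∀ l v w x, v ∈ G.verts → w ∈ G.verts → x ∈ G.verts →
      ord l v w → ord l w x → ord l v x)
    (hirr : ∀ l v, v ∈ G.verts → ¬ ord l v v)
    (htotal : ∀ l v w, v ∈ G.verts → w ∈ G.verts → v ≠ w →
      G.lab v = l → G.lab w = l → ord l v w ∨ ord l w v)
    (H : Episode V A) (hHv : H.verts = G.verts) (hHl : H.lab = G.lab)
    (hHe : H.edges = (G.verts ×ˢ G.verts).filter fun e =>
      e.1 ≠ e.2 ∧ G.lab e.1 = G.lab e.2 ∧ ord (G.lab e.1) e.1 e.2) :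
    H.Strict ∧ ∀ S : List A, G.Covers S ↔ H.Covers S := by
  have hmem_edges (v w : V) : (v, w) ∈ H.edges ↔
      (v ∈ G.verts ∧ w ∈ G.verts) ∧ v ≠ w ∧ G.lab v = G.lab w ∧ ord (G.lab v) v w := by
    rw [hHe, Finset.mem_filter, Finset.mem_product]
  refine ⟨fun v hv w hw hne hlab => ?_, fun S => ⟨fun h => ?_, fun h => ?_⟩⟩
  · rw [hHv] at hv hw
    rw [hHl] at hlab
    rcases htotal _ v w hv hw hne rfl hlab.symm with hvw | hwv
    · exact .inl ((hmem_edges v w).2 ⟨⟨hv, hw⟩, hne, hlab, hvw⟩)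
    · exact .inr ((hmem_edges w v).2 ⟨⟨hw, hv⟩, hne.symm, hlab.symm, hlab ▸ hwv⟩)
  · refine h.of_edges_labelwise_ordered hHv hHl ord htrans hirr htotal fun e he => ?_
    exact ((hmem_edges e.1 e.2).1 he).2.2
  · exact h.of_edges_subset hHv.symm hHl.symm (by simp [hG])
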